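/- arXiv:1206.5401 — 3 statements merged into one kernel-verified Lean document; each statement's English description precedes it below -/
import Mathlib

section
/- Fix n and σ > 0, and let Z ~ N(0, σ²Iₙ). Define SPB(v) = Pr{‖Z‖² ≥ (v/V_n)^{2/n}} for v > 0, where V_n is the unit-ball volume. Then SPB is a convex, continuous, monotone decreasing function of v on (0,∞). -/
/-!
Let `r u` be the radius of the ball of volume `u`, so that `SPB u = μ {z | r u ≤ ‖z‖}` for the
Gaussian measure `μ`, whose density `ρ ‖z‖` is a decreasing function of the radius. For `w < v`,
`SPB w - SPB v` is the mass of the shell between the radii `r w` and `r v`; the shell has volume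
`v - w` and the density on it lies between `ρ (r v)` and `ρ (r w)`. Hence the chord slopes of `SPB`
are squeezed between `-ρ (r w)` and `-ρ (r v)`, and since `ρ ∘ r` decreases, chord slopes over
adjacent intervals increase: `SPB` is convex, hence continuous on the open half-line.
-/

open MeasureTheory Real

open Metric Set

lemma convexOn_of_sub_mem_Icc {s : Set ℝ} (hs : Convex ℝ s) {f g : ℝ → ℝ}
    (h : ∀ ⦃x⦄, x ∈ s → ∀ ⦃y⦄, y ∈ s → x < y →
      f x - f y ∈ Icc (g y * (y - x)) (g x * (y - x))) :
    ConvexOn ℝ s f := by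
  refine convexOn_of_slope_mono_adjacent hs fun {x y z} hx hz hxy hyz => ?_
  have hy : y ∈ s := hs.ordConnected.out hx hz ⟨hxy.le, hyz.le⟩
  calc (f y - f x) / (y - x) ≤ -g y := by
        rw [div_le_iff₀ (by linarith)]; linarith [(h hx hy hxy).1]
    _ ≤ (f z - f y) / (z - y) := by
        rw [le_div_iff₀ (by linarith)]; linarith [(h hy hz hyz).2]

section RadialDensity

variable {E : Type*} [NormedAddCommGroup E] [MeasurableSpace E]

noncomputable def radialDensityMeasure (ν : Measure E) (ρ : ℝ → ℝ) : Measure E :=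
  ν.withDensity fun z => ENNReal.ofReal (ρ ‖z‖)

variable {ν : Measure E} {r : ℝ → ℝ}

lemma radius_nonneg_of_measure_ball_eq (hr : ∀ u, 0 < u → ν (ball 0 (r u)) = ENNReal.ofReal u)
    {u : ℝ} (hu : 0 < u) : 0 ≤ r u := by
  by_contra! h
  have := hr u hu
  rw [ball_eq_empty.2 h.le, measure_empty, eq_comm, ENNReal.ofReal_eq_zero] at this
  linarith

lemma strictMonoOn_of_measure_ball_eq (hr : ∀ u, 0 < u → ν (ball 0 (r u)) = ENNReal.ofReal u) :
    StrictMonoOn r (Ioi 0) := by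
  intro u hu v hv huv
  by_contra! h
  have := measure_mono (μ := ν) (ball_subset_ball (x := 0) h)
  rw [hr u hu, hr v hv, ENNReal.ofReal_le_ofReal_iff hu.le] at this
  linarith

variable [OpensMeasurableSpace E] {ρ : ℝ → ℝ}

lemma radialDensityMeasure_ball_sdiff_le (hρ : AntitoneOn ρ (Ici 0)) {a b : ℝ} (ha : 0 ≤ a) :
    radialDensityMeasure ν ρ (ball 0 b \ ball 0 a)
      ≤ ENNReal.ofReal (ρ a) * ν (ball 0 b \ ball 0 a) := by
  have hs : MeasurableSet (ball (0 : E) b \ ball 0 a) := measurableSet_ball.diff measurableSet_ball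
  rw [radialDensityMeasure, withDensity_apply _ hs, ← setLIntegral_const]
  refine setLIntegral_mono' hs fun z hz => ENNReal.ofReal_le_ofReal ?_
  have hz : a ≤ ‖z‖ := by simpa using hz.2
  exact hρ ha (ha.trans hz) hz

lemma le_radialDensityMeasure_ball_sdiff (hρ : AntitoneOn ρ (Ici 0)) (a b : ℝ) :
    ENNReal.ofReal (ρ b) * ν (ball 0 b \ ball 0 a)
      ≤ radialDensityMeasure ν ρ (ball 0 b \ ball 0 a) := by
  have hs : MeasurableSet (ball (0 : E) b \ ball 0 a) := measurableSet_ball.diff measurableSet_ball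
  rw [radialDensityMeasure, withDensity_apply _ hs, ← setLIntegral_const]
  refine setLIntegral_mono' hs fun z hz => ENNReal.ofReal_le_ofReal ?_
  have hz : ‖z‖ < b := by simpa using hz.1
  exact hρ (norm_nonneg z) ((norm_nonneg z).trans hz.le) hz.le

lemma measureReal_setOf_le_norm_sub (μ : Measure E) [IsFiniteMeasure μ] {a b : ℝ} (hab : a ≤ b) :
    μ.real {z | a ≤ ‖z‖} - μ.real {z | b ≤ ‖z‖} = μ.real (ball 0 b \ ball 0 a) := by
  have hcompl : ∀ c : ℝ, {z : E | c ≤ ‖z‖} = (ball 0 c)ᶜ := fun c => by ext; simp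
  rw [hcompl, hcompl, measureReal_compl measurableSet_ball, measureReal_compl measurableSet_ball,
    measureReal_sdiff (ball_subset_ball hab) measurableSet_ball]
  ring

lemma measure_ball_sdiff_ball_eq (hr : ∀ u, 0 < u → ν (ball 0 (r u)) = ENNReal.ofReal u)
    {w v : ℝ} (hw : 0 < w) (hwv : w ≤ v) :
    ν (ball 0 (r v) \ ball 0 (r w)) = ENNReal.ofReal (v - w) := by
  have hv : 0 < v := hw.trans_le hwv
  rw [measure_sdiff (ball_subset_ball ((strictMonoOn_of_measure_ball_eq hr).monotoneOn hw hv hwv))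
    measurableSet_ball.nullMeasurableSet (by simp [hr w hw]), hr v hv, hr w hw,
    ENNReal.ofReal_sub _ hw.le]

variable [IsFiniteMeasure (radialDensityMeasure ν ρ)]

lemma radialDensityMeasure_tail_sub_mem_Icc (hρ : AntitoneOn ρ (Ici 0)) (hρ₀ : ∀ t, 0 ≤ ρ t)
    (hr : ∀ u, 0 < u → ν (ball 0 (r u)) = ENNReal.ofReal u) {w v : ℝ} (hw : 0 < w) (hwv : w ≤ v) :
    (radialDensityMeasure ν ρ).real {z | r w ≤ ‖z‖}
        - (radialDensityMeasure ν ρ).real {z | r v ≤ ‖z‖}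
      ∈ Icc (ρ (r v) * (v - w)) (ρ (r w) * (v - w)) := by
  have hrwv : r w ≤ r v := (strictMonoOn_of_measure_ball_eq hr).monotoneOn hw (hw.trans_le hwv) hwv
  have hshell := measure_ball_sdiff_ball_eq hr hw hwv
  rw [measureReal_setOf_le_norm_sub _ hrwv]
  constructor
  · rw [Measure.real, ← ENNReal.ofReal_le_iff_le_toReal (measure_ne_top _ _),
      ENNReal.ofReal_mul (hρ₀ _), ← hshell]
    exact le_radialDensityMeasure_ball_sdiff hρ _ _
  · apply ENNReal.toReal_le_of_le_ofReal (mul_nonneg (hρ₀ _) (sub_nonneg.2 hwv))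
    rw [ENNReal.ofReal_mul (hρ₀ _), ← hshell]
    exact radialDensityMeasure_ball_sdiff_le hρ (radius_nonneg_of_measure_ball_eq hr hw)

theorem convexOn_radialDensityMeasure_tail (hρ : AntitoneOn ρ (Ici 0)) (hρ₀ : ∀ t, 0 ≤ ρ t)
    (hr : ∀ u, 0 < u → ν (ball 0 (r u)) = ENNReal.ofReal u) :
    ConvexOn ℝ (Ioi 0) fun u => (radialDensityMeasure ν ρ).real {z | r u ≤ ‖z‖} :=
  convexOn_of_sub_mem_Icc (convex_Ioi 0) fun _ hw _ _ hwv =>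
    radialDensityMeasure_tail_sub_mem_Icc hρ hρ₀ hr hw hwv.le

end RadialDensity

lemma antitoneOn_measureReal_setOf_le_norm {E : Type*} [SeminormedAddGroup E] [MeasurableSpace E]
    (μ : Measure E) [IsFiniteMeasure μ] {r : ℝ → ℝ} {s : Set ℝ} (hr : MonotoneOn r s) :
    AntitoneOn (fun u => μ.real {z | r u ≤ ‖z‖}) s :=
  fun _ hu _ hv huv => measureReal_mono fun _ hz => (hr hu hv huv).trans hz

lemma rpow_two_div_le_sq_iff {x y : ℝ} (n : ℝ) (hx : 0 ≤ x) (hy : 0 ≤ y) :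
    x ^ (2 / n) ≤ y ^ 2 ↔ x ^ (1 / n) ≤ y := by
  rw [show 2 / n = 1 / n * (2 : ℕ) by ring, rpow_mul hx, rpow_natCast]
  exact pow_le_pow_iff_left₀ (rpow_nonneg hx _) hy two_ne_zero

lemma sqrt_pi_pow_div_Gamma_eq {n : ℕ} (hn : n ≠ 0) :
    √π ^ n / Gamma (n / 2 + 1) = π ^ ((n : ℝ) / 2) / ((n / 2) * Gamma (n / 2)) := by
  rw [Gamma_add_one (by positivity), sqrt_eq_rpow, ← rpow_natCast, ← rpow_mul pi_pos.le]
  ring_nf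

lemma EuclideanSpace.volume_ball_rpow {n : ℕ} (hn : n ≠ 0) {u : ℝ} (hu : 0 ≤ u) :
    volume (ball (0 : EuclideanSpace ℝ (Fin n))
      ((u / (√π ^ n / Gamma (n / 2 + 1))) ^ (1 / (n : ℝ)))) = ENNReal.ofReal u := by
  have : Nonempty (Fin n) := ⟨⟨0, Nat.pos_of_ne_zero hn⟩⟩
  have hV : 0 < √π ^ n / Gamma (n / 2 + 1) := by positivity
  rw [EuclideanSpace.volume_ball, Fintype.card_fin, ← ENNReal.ofReal_pow (by positivity),
    ← ENNReal.ofReal_mul (by positivity), ← rpow_natCast, ← rpow_mul (by positivity),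
    one_div_mul_cancel (by exact_mod_cast hn), rpow_one, div_mul_cancel₀ _ hV.ne']

lemma antitoneOn_mul_exp_neg_sq_div {c d : ℝ} (hc : 0 ≤ c) (hd : 0 ≤ d) :
    AntitoneOn (fun t => c * exp (-t ^ 2 / d)) (Ici 0) := by
  intro a ha b _ hab
  have : a ^ 2 ≤ b ^ 2 := pow_le_pow_left₀ ha hab 2
  dsimp only
  gcongr

lemma isFiniteMeasure_radialDensityMeasure_mul_exp_neg_sq_div {V : Type*} [NormedAddCommGroup V]
    [InnerProductSpace ℝ V] [FiniteDimensional ℝ V] [MeasurableSpace V] [BorelSpace V]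
    (c : ℝ) {d : ℝ} (hd : 0 < d) :
    IsFiniteMeasure (radialDensityMeasure (volume : Measure V) fun t => c * exp (-t ^ 2 / d)) := by
  have hgauss : Integrable fun v : V => exp (-d⁻¹ * ‖v‖ ^ 2) :=
    Integrable.of_integral_ne_zero <| by
      rw [GaussianFourier.integral_rexp_neg_mul_sq_norm (inv_pos.2 hd)]
      positivity
  have hρ : Integrable fun v : V => c * exp (-‖v‖ ^ 2 / d) := by
    simpa only [neg_mul, ← div_eq_inv_mul, neg_div] using hgauss.const_mul c
  exact isFiniteMeasure_withDensity_ofReal hρ.hasFiniteIntegral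

/-- The sphere-packing function `SPB(v) = Pr{‖Z‖² ≥ (v/V_n)^{2/n}}`, for
`Z ~ N(0,σ²Iₙ)`, is convex, continuous and monotone decreasing on `(0,∞)`. -/
theorem stmt11 (n : ℕ) (hn : 1 ≤ n) (σ : ℝ) (hσ : 0 < σ)
    (Vn : ℝ) (hVn : Vn = π ^ ((n : ℝ) / 2) / (((n : ℝ) / 2) * Real.Gamma ((n : ℝ) / 2)))
    (γ : Measure (EuclideanSpace ℝ (Fin n)))
    (hγ : γ = volume.withDensity (fun z => ENNReal.ofReal
      ((2 * π * σ ^ 2) ^ (-(n : ℝ) / 2) * Real.exp (-‖z‖ ^ 2 / (2 * σ ^ 2)))))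
    (SPB : ℝ → ℝ)
    (hSPB : ∀ v, SPB v = (γ {z | (v / Vn) ^ (2 / (n : ℝ)) ≤ ‖z‖ ^ 2}).toReal) :
    ConvexOn ℝ (Set.Ioi 0) SPB ∧ ContinuousOn SPB (Set.Ioi 0)
      ∧ AntitoneOn SPB (Set.Ioi 0) := by
  have hn₀ : n ≠ 0 := by omega
  have hVn_ball : Vn = √π ^ n / Gamma (n / 2 + 1) := by rw [hVn, sqrt_pi_pow_div_Gamma_eq hn₀]
  have hr : ∀ u, 0 < u → volume (ball (0 : EuclideanSpace ℝ (Fin n)) ((u / Vn) ^ (1 / (n : ℝ))))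
      = ENNReal.ofReal u := fun u hu => hVn_ball ▸ EuclideanSpace.volume_ball_rpow hn₀ hu.le
  set ρ : ℝ → ℝ := fun t => (2 * π * σ ^ 2) ^ (-(n : ℝ) / 2) * exp (-t ^ 2 / (2 * σ ^ 2))
  have hγρ : γ = radialDensityMeasure volume ρ := hγ
  have hρ : AntitoneOn ρ (Ici 0) := antitoneOn_mul_exp_neg_sq_div (by positivity) (by positivity)
  have : IsFiniteMeasure (radialDensityMeasure (volume : Measure (EuclideanSpace ℝ (Fin n))) ρ) :=
    isFiniteMeasure_radialDensityMeasure_mul_exp_neg_sq_div _ (by positivity)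
  have hSPB_tail : EqOn (fun u => γ.real {z | (u / Vn) ^ (1 / (n : ℝ)) ≤ ‖z‖}) SPB (Ioi 0) := by
    intro u hu
    have hVpos : 0 < Vn := hVn_ball ▸ by positivity
    simp only [hSPB, rpow_two_div_le_sq_iff _ (div_pos hu hVpos).le (norm_nonneg _)]
    rfl
  rw [hγρ] at hSPB_tail
  have hconv : ConvexOn ℝ (Ioi 0) SPB :=
    (convexOn_radialDensityMeasure_tail hρ (fun t => by positivity) hr).congr hSPB_tail
  have hanti : AntitoneOn SPB (Ioi 0) :=
    (antitoneOn_measureReal_setOf_le_norm _ (strictMonoOn_of_measure_ball_eq hr).monotoneOn).congr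
      hSPB_tail
  exact ⟨hconv, hconv.continuousOn isOpen_Ioi, hanti⟩
end

section
/- For small t > 0, the function η₁(t) = −∫_{−∞}^{∞} (Q(y − t/2) − Q(y + t/2))·ln(Q(y − t/2) − Q(y + t/2)) dy satisfies η₁(t) = −t·C(t) + o(t·|C(t)|) where C(t) = (1/2)ln(t²/(2πe)); in particular η₁(t) → 0 as t → 0⁺. -/
/-!
Write `p_t(y) = Q(y - t/2) - Q(y + t/2)`. It is a uniform mixture of unit-variance Gaussian
densities, `p_t(y) = ∫_{-t/2}^{t/2} φ(y - μ) dμ`, so Fubini gives `∫ p_t = t` and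
`∫ y² p_t = t + t³/12`. On the window, `φ(y - μ) = φ(y) exp(μy - μ²/2)` stays within a factor
`exp (± (t|y|/2 + t²/8))` of `φ(y)`; hence `p_t log p_t = p_t log (t φ) + O(t² φ(y) e^{|y|})`.
Since `log (t φ(y)) = log t - log √(2π) - y²/2`, the two moments give
`η₁(t) = -t C(t) + t³/24 + O(t²)`, and `t² = o(t |C(t)|)` because `|C(t)| → ∞`.
-/

open MeasureTheory Real Filter Asymptotics Topology

/-- The standard Gaussian tail function `Q`. -/
noncomputable def gaussQ (t : ℝ) : ℝ :=
  ∫ u in Set.Ioi t, (1 / Real.sqrt (2 * π)) * Real.exp (-u ^ 2 / 2)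

/-- The first error moment function `η₁`. -/
noncomputable def eta1 (t : ℝ) : ℝ :=
  -∫ y : ℝ, (gaussQ (y - t / 2) - gaussQ (y + t / 2))
      * Real.log (gaussQ (y - t / 2) - gaussQ (y + t / 2))

open ProbabilityTheory Set
open scoped NNReal

lemma gaussianPDFReal_zero_one (u : ℝ) :
    gaussianPDFReal 0 1 u = 1 / √(2 * π) * exp (-u ^ 2 / 2) := by
  simp [gaussianPDFReal]

lemma gaussianPDFReal_eq_mul_exp (μ y : ℝ) :
    gaussianPDFReal μ 1 y = gaussianPDFReal 0 1 y * exp (μ * y - μ ^ 2 / 2) := by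
  simp only [gaussianPDFReal, NNReal.coe_one, mul_one, sub_zero, mul_assoc, ← exp_add]
  ring_nf

lemma integral_sq_mul_gaussianPDFReal (μ : ℝ) {v : ℝ≥0} (hv : v ≠ 0) :
    ∫ x, x ^ 2 * gaussianPDFReal μ v x = v + μ ^ 2 := by
  have h := variance_eq_sub (memLp_id_gaussianReal (μ := μ) (v := v) 2)
  simp only [variance_id_gaussianReal, id_eq, Pi.pow_apply, integral_id_gaussianReal] at h
  rw [eq_sub_iff_add_eq, integral_gaussianReal_eq_integral_smul hv] at h
  simp only [smul_eq_mul, mul_comm] at h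
  exact h.symm

lemma integrable_sq_mul_gaussianPDFReal (μ : ℝ) {v : ℝ≥0} (hv : v ≠ 0) :
    Integrable fun x ↦ x ^ 2 * gaussianPDFReal μ v x :=
  .of_integral_ne_zero <| by rw [integral_sq_mul_gaussianPDFReal μ hv]; positivity

lemma integrable_gaussianPDFReal_mul_exp_abs :
    Integrable fun y ↦ gaussianPDFReal 0 1 y * exp |y| := by
  have hshift : ∀ μ y,
      gaussianPDFReal 0 1 y * exp (μ * y) = exp (μ ^ 2 / 2) * gaussianPDFReal μ 1 y := fun μ y ↦ by
    rw [gaussianPDFReal_eq_mul_exp μ y, exp_sub]; field_simp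
  refine ((integrable_gaussianPDFReal 1 1).add (integrable_gaussianPDFReal (-1) 1)).const_mul
    (exp (1 / 2)) |>.mono' (by fun_prop) (ae_of_all _ fun y ↦ ?_)
  have hexp : exp |y| ≤ exp (1 * y) + exp (-1 * y) := by
    rcases abs_cases y with ⟨h, -⟩ | ⟨h, -⟩ <;> simp [h, (exp_pos _).le]
  calc ‖gaussianPDFReal 0 1 y * exp |y|‖ = gaussianPDFReal 0 1 y * exp |y| :=
        Real.norm_of_nonneg (by positivity [gaussianPDFReal_nonneg 0 1 y])
    _ ≤ gaussianPDFReal 0 1 y * (exp (1 * y) + exp (-1 * y)) :=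
        mul_le_mul_of_nonneg_left hexp (gaussianPDFReal_nonneg _ _ _)
    _ = _ := by rw [mul_add, hshift, hshift]; norm_num; ring

lemma integral_mul_intervalIntegral_gaussianPDFReal {g : ℝ → ℝ} (hg₀ : 0 ≤ g)
    (hg : Measurable g) (hint : ∀ μ, Integrable fun x ↦ g x * gaussianPDFReal μ 1 x)
    {a b : ℝ} (hab : a ≤ b)
    (hmom : IntervalIntegrable (fun μ ↦ ∫ x, g x * gaussianPDFReal μ 1 x) volume a b) :
    Integrable (fun y ↦ g y * ∫ μ in a..b, gaussianPDFReal μ 1 y) ∧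
      ∫ y, g y * ∫ μ in a..b, gaussianPDFReal μ 1 y =
        ∫ μ in a..b, ∫ x, g x * gaussianPDFReal μ 1 x := by
  set F : ℝ × ℝ → ℝ := fun z ↦ g z.1 * gaussianPDFReal z.2 1 z.1
  have hF : Integrable F (volume.prod (volume.restrict (Ioc a b))) := by
    have hmeas : Measurable F := hg.comp measurable_fst |>.mul <|
      measurable_uncurry_gaussianPDFReal.comp
        (measurable_snd.prodMk (measurable_const.prodMk measurable_fst))
    refine (integrable_prod_iff' hmeas.aestronglyMeasurable).2 ⟨ae_of_all _ hint, ?_⟩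
    have hnorm : ∀ z, ‖F z‖ = F z := fun z ↦
      Real.norm_of_nonneg (mul_nonneg (hg₀ _) (gaussianPDFReal_nonneg _ _ _))
    simp only [hnorm]
    exact (intervalIntegrable_iff_integrableOn_Ioc_of_le hab).1 hmom
  have hsection : ∀ y, g y * ∫ μ in a..b, gaussianPDFReal μ 1 y = ∫ μ in Ioc a b, F (y, μ) :=
    fun y ↦ by rw [intervalIntegral.integral_of_le hab, ← integral_const_mul]
  simp only [hsection]
  exact ⟨hF.integral_prod_left, by
    rw [intervalIntegral.integral_of_le hab, integral_integral_swap hF]⟩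

lemma abs_mul_sub_sq_div_two_le {μ r : ℝ} (hμ : |μ| ≤ r) (y : ℝ) :
    |μ * y - μ ^ 2 / 2| ≤ r * |y| + r ^ 2 / 2 := by
  have hμ2 : μ ^ 2 ≤ r ^ 2 := sq_le_sq' (abs_le.1 hμ).1 (abs_le.1 hμ).2
  calc |μ * y - μ ^ 2 / 2| ≤ |μ * y| + |μ ^ 2 / 2| := abs_sub _ _
    _ = |μ| * |y| + μ ^ 2 / 2 := by
        rw [abs_mul, abs_of_nonneg (by positivity : (0 : ℝ) ≤ μ ^ 2 / 2)]
    _ ≤ r * |y| + r ^ 2 / 2 := by gcongr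

lemma abs_mul_log_sub_log_le {p a E : ℝ} (ha : 0 < a) (hlo : a * exp (-E) ≤ p)
    (hhi : p ≤ a * exp E) : |p * (log p - log a)| ≤ a * exp E * E := by
  have hp : 0 < p := lt_of_lt_of_le (by positivity) hlo
  have hE : 0 ≤ E := by
    have := exp_le_exp.1 (le_of_mul_le_mul_left (hlo.trans hhi) ha)
    linarith
  have hlog : |log p - log a| ≤ E := by
    have h1 := log_le_log (by positivity) hlo
    have h2 := log_le_log hp hhi
    rw [log_mul ha.ne' (exp_pos _).ne', log_exp] at h1 h2
    exact abs_le.2 ⟨by linarith, by linarith⟩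
  rw [abs_mul, abs_of_pos hp]
  exact mul_le_mul hhi hlog (abs_nonneg _) (by positivity)

lemma half_mul_log_sq_div_eq {t : ℝ} (ht : 0 < t) :
    1 / 2 * log (t ^ 2 / (2 * π * exp 1)) = log t - log √(2 * π) - 1 / 2 := by
  rw [log_div (by positivity) (by positivity), log_pow, log_mul (by positivity) (by positivity),
    log_exp, log_sqrt (by positivity)]
  push_cast
  ring

lemma tendsto_mul_log_sub_const (c : ℝ) :
    Tendsto (fun t ↦ t * (log t - c)) (𝓝[>] 0) (𝓝 0) := by
  have h := (tendsto_log_mul_rpow_nhdsGT_zero zero_lt_one).sub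
    ((tendsto_nhdsWithin_of_tendsto_nhds (continuous_id.tendsto 0)).mul_const c)
  simp only [Real.rpow_one, id, zero_mul, sub_zero] at h
  exact h.congr fun t ↦ by ring

lemma isLittleO_sq_mul_abs {l : Filter ℝ} (hl : l ≤ 𝓝 0) {f : ℝ → ℝ}
    (hf : Tendsto (fun t ↦ |f t|) l atTop) : (fun t ↦ t ^ 2) =o[l] fun t ↦ t * |f t| := by
  have h : (fun t : ℝ ↦ t) =o[l] fun t ↦ |f t| :=
    ((isLittleO_one_iff ℝ).2 (tendsto_id.mono_left hl)).trans
      ((isLittleO_one_left_iff ℝ).2 (by simpa using hf))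
  simpa [sq] using (isBigO_refl (fun t : ℝ ↦ t) l).mul_isLittleO h

lemma gaussQ_eq_setIntegral (a : ℝ) : gaussQ a = ∫ u in Ioi a, gaussianPDFReal 0 1 u := by
  simp only [gaussQ, gaussianPDFReal_zero_one]

lemma gaussQ_sub_gaussQ (y a : ℝ) :
    gaussQ (y - a) - gaussQ (y + a) = ∫ μ in -a..a, gaussianPDFReal μ 1 y := by
  have hφ := (integrable_gaussianPDFReal 0 1).integrableOn (s := Ioi (y - a))
  rw [gaussQ_eq_setIntegral, gaussQ_eq_setIntegral,
    intervalIntegral.integral_Ioi_sub_Ioi' hφ (integrable_gaussianPDFReal 0 1).integrableOn]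
  have h := intervalIntegral.integral_comp_sub_left (gaussianPDFReal 0 1) (a := -a) (b := a) y
  simp only [gaussianPDFReal_sub, zero_add, sub_neg_eq_add] at h
  exact h.symm

noncomputable def binProb (t y : ℝ) : ℝ := gaussQ (y - t / 2) - gaussQ (y + t / 2)

lemma binProb_eq_intervalIntegral (t y : ℝ) :
    binProb t y = ∫ μ in -(t / 2)..t / 2, gaussianPDFReal μ 1 y :=
  gaussQ_sub_gaussQ y (t / 2)

lemma integrable_and_integral_binProb {t : ℝ} (ht : 0 ≤ t) :
    Integrable (binProb t) ∧ ∫ y, binProb t y = t := by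
  have h := integral_mul_intervalIntegral_gaussianPDFReal (g := 1) zero_le_one measurable_const
    (fun μ ↦ by simpa using integrable_gaussianPDFReal μ 1) (by linarith : -(t / 2) ≤ t / 2)
    (by simp only [Pi.one_apply, one_mul, integral_gaussianPDFReal_eq_one _ one_ne_zero]
        exact intervalIntegrable_const)
  simp only [Pi.one_apply, one_mul, integral_gaussianPDFReal_eq_one _ one_ne_zero,
    intervalIntegral.integral_const, smul_eq_mul, mul_one, ← binProb_eq_intervalIntegral] at h
  exact ⟨h.1, by rw [h.2]; ring⟩

lemma integrable_and_integral_sq_mul_binProb {t : ℝ} (ht : 0 ≤ t) :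
    Integrable (fun y ↦ y ^ 2 * binProb t y) ∧ ∫ y, y ^ 2 * binProb t y = t + t ^ 3 / 12 := by
  have h := integral_mul_intervalIntegral_gaussianPDFReal (g := fun x ↦ x ^ 2)
    (fun x ↦ sq_nonneg x) (by fun_prop) (fun μ ↦ integrable_sq_mul_gaussianPDFReal μ one_ne_zero)
    (by linarith : -(t / 2) ≤ t / 2)
    (by simp only [integral_sq_mul_gaussianPDFReal _ one_ne_zero]
        exact Continuous.intervalIntegrable (by fun_prop) _ _)
  simp only [integral_sq_mul_gaussianPDFReal _ one_ne_zero, ← binProb_eq_intervalIntegral] at h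
  refine ⟨h.1, ?_⟩
  rw [h.2, intervalIntegral.integral_add intervalIntegrable_const
    (intervalIntegral.intervalIntegrable_pow 2), intervalIntegral.integral_const, integral_pow]
  norm_num
  ring

lemma binProb_bounds {t : ℝ} (ht : 0 ≤ t) (y : ℝ) :
    t * gaussianPDFReal 0 1 y * exp (-(t / 2 * |y| + t ^ 2 / 8)) ≤ binProb t y ∧
      binProb t y ≤ t * gaussianPDFReal 0 1 y * exp (t / 2 * |y| + t ^ 2 / 8) := by
  have hpt : ∀ μ ∈ Icc (-(t / 2)) (t / 2),
      gaussianPDFReal 0 1 y * exp (-(t / 2 * |y| + t ^ 2 / 8)) ≤ gaussianPDFReal μ 1 y ∧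
        gaussianPDFReal μ 1 y ≤ gaussianPDFReal 0 1 y * exp (t / 2 * |y| + t ^ 2 / 8) := by
    intro μ hμ
    have h := abs_le.1 <| abs_mul_sub_sq_div_two_le (abs_le.2 hμ) y
    have hφ := gaussianPDFReal_nonneg 0 1 y
    rw [gaussianPDFReal_eq_mul_exp μ y]
    exact ⟨by gcongr; linarith [h.1], by gcongr; linarith [h.2]⟩
  have hab : -(t / 2) ≤ t / 2 := by linarith
  have hint : IntervalIntegrable (fun μ ↦ gaussianPDFReal μ 1 y) volume (-(t / 2)) (t / 2) :=
    Continuous.intervalIntegrable (by unfold gaussianPDFReal; fun_prop) _ _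
  have hlo := intervalIntegral.integral_mono_on hab intervalIntegrable_const hint
    fun μ hμ ↦ (hpt μ hμ).1
  have hhi := intervalIntegral.integral_mono_on hab hint intervalIntegrable_const
    fun μ hμ ↦ (hpt μ hμ).2
  simp only [intervalIntegral.integral_const, smul_eq_mul, sub_neg_eq_add, add_halves] at hlo hhi
  rw [binProb_eq_intervalIntegral]
  exact ⟨by linarith, by linarith⟩

lemma abs_binProb_mul_log_sub_le {t : ℝ} (ht₀ : 0 < t) (ht₁ : t ≤ 1) (y : ℝ) :
    |binProb t y * (log (binProb t y) - log (t * gaussianPDFReal 0 1 y))| ≤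
      t ^ 2 * (exp (1 / 4) * (gaussianPDFReal 0 1 y * exp |y|)) := by
  have hφ := gaussianPDFReal_pos 0 1 y one_ne_zero
  obtain ⟨hlo, hhi⟩ := binProb_bounds ht₀.le y
  have hy := abs_nonneg y
  have hE : t / 2 * |y| + t ^ 2 / 8 ≤ t * (|y| / 2 + 1 / 8) := by nlinarith
  have hs : t * (|y| / 2 + 1 / 8) ≤ |y| / 2 + 1 / 8 := by nlinarith
  have hexp : exp (|y| / 2 + 1 / 8) * exp (|y| / 2 + 1 / 8) = exp (1 / 4) * exp |y| := by
    rw [← exp_add, ← exp_add]; ring_nf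
  calc _ ≤ t * gaussianPDFReal 0 1 y * exp (t / 2 * |y| + t ^ 2 / 8) *
        (t / 2 * |y| + t ^ 2 / 8) := abs_mul_log_sub_log_le (by positivity) hlo hhi
    _ ≤ t * gaussianPDFReal 0 1 y * exp (|y| / 2 + 1 / 8) * (t * exp (|y| / 2 + 1 / 8)) :=
        mul_le_mul (mul_le_mul_of_nonneg_left (exp_le_exp.2 (hE.trans hs)) (by positivity))
          (hE.trans (mul_le_mul_of_nonneg_left
            (by linarith [add_one_le_exp (|y| / 2 + 1 / 8)]) ht₀.le))
          (by positivity) (by positivity)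
    _ = _ := by linear_combination (t ^ 2 * gaussianPDFReal 0 1 y) * hexp

lemma integrable_binProb_mul_log_sub {t : ℝ} (ht₀ : 0 < t) (ht₁ : t ≤ 1) :
    Integrable fun y ↦ binProb t y * (log (binProb t y) - log (t * gaussianPDFReal 0 1 y)) := by
  have hp := (integrable_and_integral_binProb ht₀.le).1.aemeasurable
  refine ((integrable_gaussianPDFReal_mul_exp_abs.const_mul (exp (1 / 4))).const_mul (t ^ 2)).mono'
    (hp.mul (hp.log.sub (by fun_prop))).aestronglyMeasurable
    (ae_of_all _ fun y ↦ (Real.norm_eq_abs _).trans_le (abs_binProb_mul_log_sub_le ht₀ ht₁ y))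

lemma eta1_add_mul_log_eq {t : ℝ} (ht : 0 < t) (ht₁ : t ≤ 1) :
    eta1 t + t * (log t - log √(2 * π) - 1 / 2) =
      t ^ 3 / 24 - ∫ y, binProb t y * (log (binProb t y) - log (t * gaussianPDFReal 0 1 y)) := by
  obtain ⟨hp, hp_int⟩ := integrable_and_integral_binProb ht.le
  obtain ⟨hp2, hp2_int⟩ := integrable_and_integral_sq_mul_binProb ht.le
  have hlog : ∀ y, log (t * gaussianPDFReal 0 1 y) = log t - log √(2 * π) - y ^ 2 / 2 := by
    intro y
    rw [gaussianPDFReal_zero_one, log_mul ht.ne' (by positivity), log_mul (by positivity)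
      (exp_pos _).ne', log_exp, one_div, log_inv]
    ring
  have hsplit : ∀ y, binProb t y * log (binProb t y) =
      ((log t - log √(2 * π)) * binProb t y - 1 / 2 * (y ^ 2 * binProb t y)) +
        binProb t y * (log (binProb t y) - log (t * gaussianPDFReal 0 1 y)) := by
    intro y; rw [hlog]; ring
  rw [show eta1 t = -∫ y, binProb t y * log (binProb t y) from rfl]
  simp_rw [hsplit]
  have hmain : Integrable fun y ↦
      (log t - log √(2 * π)) * binProb t y - 1 / 2 * (y ^ 2 * binProb t y) :=
    (hp.const_mul _).sub (hp2.const_mul _)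
  rw [integral_add hmain (integrable_binProb_mul_log_sub ht ht₁),
    integral_sub (hp.const_mul _) (hp2.const_mul _),
    integral_const_mul, integral_const_mul, hp_int, hp2_int]
  ring

lemma eta1_add_mul_log_isBigO :
    (fun t ↦ eta1 t + t * (log t - log √(2 * π) - 1 / 2)) =O[𝓝[>] 0] fun t ↦ t ^ 2 := by
  set K := exp (1 / 4) * ∫ y, gaussianPDFReal 0 1 y * exp |y|
  refine IsBigO.of_bound (1 / 24 + K) ?_
  filter_upwards [Ioo_mem_nhdsGT (zero_lt_one' ℝ)] with t ⟨ht₀, ht₁⟩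
  have hR : |∫ y, binProb t y * (log (binProb t y) - log (t * gaussianPDFReal 0 1 y))| ≤
      K * t ^ 2 := by
    calc _ ≤ ∫ y, t ^ 2 * (exp (1 / 4) * (gaussianPDFReal 0 1 y * exp |y|)) :=
          abs_integral_le_integral_abs.trans <| integral_mono
            (integrable_binProb_mul_log_sub ht₀ ht₁.le).abs
            ((integrable_gaussianPDFReal_mul_exp_abs.const_mul _).const_mul _)
            fun y ↦ abs_binProb_mul_log_sub_le ht₀ ht₁.le y
      _ = K * t ^ 2 := by rw [integral_const_mul, integral_const_mul]; ring
  rw [Real.norm_eq_abs, Real.norm_eq_abs, eta1_add_mul_log_eq ht₀ ht₁.le,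
    abs_of_nonneg (sq_nonneg t)]
  calc _ ≤ |t ^ 3 / 24| + K * t ^ 2 := (abs_sub _ _).trans (by gcongr)
    _ ≤ (1 / 24 + K) * t ^ 2 := by
        rw [abs_of_pos (by positivity)]
        nlinarith [pow_le_pow_of_le_one ht₀.le ht₁.le (by norm_num : 2 ≤ 3)]

/-- Small-`t` asymptotics of `η₁`: `η₁(t) = −t·C(t) + o(t·|C(t)|)` as `t → 0⁺`,
where `C(t) = (1/2)ln(t²/(2πe))`; in particular `η₁(t) → 0`. -/
theorem stmt14 :
    (fun t => eta1 t - (-(t * ((1 / 2) * Real.log (t ^ 2 / (2 * π * Real.exp 1)))))) =o[𝓝[>] 0]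
      (fun t => t * |(1 / 2) * Real.log (t ^ 2 / (2 * π * Real.exp 1))|)
    ∧ Tendsto eta1 (𝓝[>] 0) (𝓝 0) := by
  set C : ℝ → ℝ := fun t ↦ (1 / 2) * Real.log (t ^ 2 / (2 * π * Real.exp 1))
  have hC : ∀ᶠ t in 𝓝[>] 0, C t = log t - log √(2 * π) - 1 / 2 :=
    eventually_mem_nhdsWithin.mono fun t ht ↦ half_mul_log_sq_div_eq ht
  have hO : (fun t ↦ eta1 t + t * C t) =O[𝓝[>] 0] fun t ↦ t ^ 2 :=
    eta1_add_mul_log_isBigO.congr' (hC.mono fun t ht ↦ by simp only [ht]) .rfl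
  have hC_abs : Tendsto (fun t ↦ |C t|) (𝓝[>] 0) atTop :=
    tendsto_abs_atBot_atTop.comp <|
      (tendsto_atBot_add_const_right _ (-(log √(2 * π) + 1 / 2)) tendsto_log_nhdsGT_zero).congr'
        (hC.mono fun t ht ↦ by rw [ht]; ring)
  have hmul : Tendsto (fun t ↦ t * C t) (𝓝[>] 0) (𝓝 0) :=
    (tendsto_mul_log_sub_const (log √(2 * π) + 1 / 2)).congr'
      (hC.mono fun t ht ↦ by dsimp only; rw [ht]; ring)
  refine ⟨by simpa only [sub_neg_eq_add] using
    hO.trans_isLittleO (isLittleO_sq_mul_abs nhdsWithin_le_nhds hC_abs), ?_⟩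
  have hsq : Tendsto (fun t : ℝ ↦ t ^ 2) (𝓝[>] 0) (𝓝 0) :=
    tendsto_nhdsWithin_of_tendsto_nhds (by simpa using (continuous_pow 2).tendsto (0 : ℝ))
  simpa using (hO.trans_tendsto hsq).sub hmul
end

section
/- Let H be a positive random variable with density f satisfying f(h) = c·h^{α−1}(1 + o(1)) as h → 0⁺ for some α > 0, c > 0, and f(h) ≤ C/h^{1+β'} for h ≥ h₁ for some β' > 0, C > 0, h₁ > 0. Let g: (0,∞) → [0,M] be a bounded measurable function with g(t) ≤ K·t·(1 + |ln t|) for t ∈ (0,1]. Then E[(σ/(aH))·g(aH/σ)] = O((σ/a)^{min(α,1)}·ln(a/σ)) as a/σ → ∞. -/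
open MeasureTheory Real Filter Topology Set
open scoped ENNReal

/-!
Write `r = a / σ`, so that the integrand is `ψ (r h)` with `ψ t = g t / t`. Two bounds on `ψ` are
available: `ψ t ≲ t ^ (-α/2)` on `(0, 1]`, because `1 + |log t| ≲ t ^ (-α/2)`, and `ψ t ≤ M / t`
everywhere. Near the origin the density is at most `2c h^(α-1)` on some `(0, δ]`. Split the
expectation at `h = 1/r` and `h = δ`. On `(0, 1/r]` the first bound gives
`∫ (r h)^(-α/2) h^(α-1) dh ≲ r^(-α)`. On `(1/r, δ]` the second gives
`r⁻¹ ∫ h^(α-2) dh ≲ r^(-min α 1) log r`, the logarithm absorbing the borderline case `α = 1`.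
On `(δ, ∞)`, `ψ (r h) ≤ M / (r δ)`.
-/

lemma one_add_abs_log_le_mul_rpow_neg {t s : ℝ} (ht0 : 0 < t) (ht1 : t ≤ 1) (hs : 0 < s) :
    1 + |log t| ≤ (1 + 1 / s) * t ^ (-s) := by
  have hpow : 1 ≤ t ^ (-s) := one_le_rpow_of_pos_of_le_one_of_nonpos ht0 ht1 (by linarith)
  have hlog : |log t| ≤ t ^ (-s) / s := by
    rw [abs_of_nonpos (log_nonpos ht0.le ht1), ← log_inv, rpow_neg ht0.le, ← inv_rpow ht0.le]
    exact log_le_rpow_div (inv_nonneg.2 ht0.le) hs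
  calc 1 + |log t| ≤ t ^ (-s) + t ^ (-s) / s := add_le_add hpow hlog
    _ = (1 + 1 / s) * t ^ (-s) := by ring

lemma inv_mul_le_mul_rpow_neg {y K s t : ℝ} (hK : 0 ≤ K) (hs : 0 < s) (ht0 : 0 < t) (ht1 : t ≤ 1)
    (hy : y ≤ K * t * (1 + |log t|)) : t⁻¹ * y ≤ K * (1 + 1 / s) * t ^ (-s) := by
  calc t⁻¹ * y ≤ t⁻¹ * (K * t * (1 + |log t|)) := by gcongr
    _ = K * (1 + |log t|) := by field_simp
    _ ≤ K * ((1 + 1 / s) * t ^ (-s)) := by gcongr; exact one_add_abs_log_le_mul_rpow_neg ht0 ht1 hs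
    _ = K * (1 + 1 / s) * t ^ (-s) := by ring

lemma exists_Ioc_le_two_mul_of_tendsto_div {f ρ : ℝ → ℝ} (hρ : ∀ x > 0, 0 < ρ x)
    (hfρ : Tendsto (fun x => f x / ρ x) (𝓝[>] 0) (𝓝 1)) :
    ∃ δ ∈ Ioc (0 : ℝ) 1, ∀ x ∈ Ioc 0 δ, f x ≤ 2 * ρ x := by
  obtain ⟨u, hu, hsub⟩ :=
    mem_nhdsGT_iff_exists_Ioc_subset.1 (hfρ.eventually (gt_mem_nhds one_lt_two))
  refine ⟨min u 1, ⟨lt_min hu one_pos, min_le_right _ _⟩, fun x hx => ?_⟩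
  have hx' : f x / ρ x < 2 := hsub ⟨hx.1, hx.2.trans (min_le_left _ _)⟩
  exact ((div_lt_iff₀ (hρ x hx.1)).1 hx').le

lemma integral_Ioc_zero_rpow_sub_one {b p : ℝ} (hb : 0 ≤ b) (hp : 0 < p) :
    ∫ x in Ioc 0 b, x ^ (p - 1) = b ^ p / p := by
  rw [← intervalIntegral.integral_of_le hb, integral_rpow (Or.inl (by linarith)), sub_add_cancel,
    zero_rpow hp.ne', sub_zero]

lemma integrableOn_Ioc_zero_rpow_sub_one {b p : ℝ} (hp : 0 < p) :
    IntegrableOn (fun x => x ^ (p - 1)) (Ioc 0 b) :=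
  (intervalIntegral.intervalIntegrable_rpow' (by linarith)).1

lemma integral_Ioc_inv {a b : ℝ} (ha : 0 < a) (hab : a ≤ b) :
    ∫ x in Ioc a b, x⁻¹ = log (b / a) := by
  rw [← intervalIntegral.integral_of_le hab, integral_inv (notMem_uIcc_of_lt ha (ha.trans_le hab))]

lemma integrableOn_Ioc_inv {a b : ℝ} (ha : 0 < a) (hab : a ≤ b) :
    IntegrableOn (fun x => x⁻¹) (Ioc a b) :=
  (intervalIntegrable_inv_iff.2 (Or.inr (notMem_uIcc_of_lt ha (ha.trans_le hab)))).1

lemma setLIntegral_Ioi_le_add_add {μ : Measure ℝ} (f : ℝ → ℝ≥0∞) {a b c : ℝ} (hab : a ≤ b)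
    (hbc : b ≤ c) :
    ∫⁻ x in Ioi a, f x ∂μ
      ≤ ∫⁻ x in Ioc a b, f x ∂μ + (∫⁻ x in Ioc b c, f x ∂μ + ∫⁻ x in Ioi c, f x ∂μ) := by
  rw [← Ioc_union_Ioi_eq_Ioi hab, ← Ioc_union_Ioi_eq_Ioi hbc]
  exact (lintegral_union_le _ _ _).trans (add_le_add le_rfl (lintegral_union_le _ _ _))

lemma inv_rpow_le_inv_rpow_mul_log {r p q : ℝ} (hr : exp 1 ≤ r) (hqp : q ≤ p) :
    r⁻¹ ^ p ≤ r⁻¹ ^ q * log r := by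
  have hr0 : 0 < r := (exp_pos 1).trans_le hr
  have hlog : 1 ≤ log r := by rwa [le_log_iff_exp_le hr0]
  exact (rpow_le_rpow_of_exponent_ge (inv_pos.2 hr0)
    (inv_le_one_of_one_le₀ ((one_le_exp zero_le_one).trans hr)) hqp).trans
    (le_mul_of_one_le_right (by positivity) hlog)

section WithDensity

variable {X : Type*} [MeasurableSpace X] {μ ν : Measure X} {s : Set X}

lemma restrict_withDensity_le_withDensity {f g : X → ℝ≥0∞} (hs : MeasurableSet s)
    (hfg : ∀ x ∈ s, f x ≤ g x) : (μ.withDensity f).restrict s ≤ μ.withDensity g := by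
  rw [restrict_withDensity hs]
  calc (μ.restrict s).withDensity f ≤ (μ.restrict s).withDensity g :=
        withDensity_mono (ae_restrict_of_forall_mem hs hfg)
    _ = (μ.withDensity g).restrict s := (restrict_withDensity hs g).symm
    _ ≤ μ.withDensity g := Measure.restrict_le_self

lemma setLIntegral_ofReal_le_of_restrict_le_withDensity {ρ φ u : X → ℝ} (hρ : Measurable ρ)
    (hs : MeasurableSet s) (hν : ν.restrict s ≤ μ.withDensity fun x => ENNReal.ofReal (ρ x))
    (hρ0 : ∀ x ∈ s, 0 ≤ ρ x) (hφu : ∀ x ∈ s, ρ x * φ x ≤ u x) (hu0 : ∀ x ∈ s, 0 ≤ u x)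
    (hu : IntegrableOn u s μ) :
    ∫⁻ x in s, ENNReal.ofReal (φ x) ∂ν ≤ ENNReal.ofReal (∫ x in s, u x ∂μ) := by
  calc ∫⁻ x in s, ENNReal.ofReal (φ x) ∂ν
      ≤ ∫⁻ x in s, ENNReal.ofReal (φ x) ∂(μ.withDensity fun x => ENNReal.ofReal (ρ x)) := by
        refine lintegral_mono' ?_ le_rfl
        simpa only [Measure.restrict_restrict_of_subset (subset_refl s)]
          using Measure.restrict_mono (subset_refl s) hν
    _ = ∫⁻ x, ENNReal.ofReal (φ x) ∂((μ.restrict s).withDensity fun x => ENNReal.ofReal (ρ x)) := by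
        rw [restrict_withDensity hs]
    _ ≤ ∫⁻ x in s, ENNReal.ofReal (ρ x) * ENNReal.ofReal (φ x) ∂μ :=
        lintegral_withDensity_le_lintegral_mul _ (by fun_prop) _
    _ ≤ ∫⁻ x in s, ENNReal.ofReal (u x) ∂μ := setLIntegral_mono' hs fun x hx => by
        rw [← ENNReal.ofReal_mul (hρ0 x hx)]
        exact ENNReal.ofReal_le_ofReal (hφu x hx)
    _ = ENNReal.ofReal (∫ x in s, u x ∂μ) :=
        (ofReal_integral_eq_lintegral_ofReal hu (ae_restrict_of_forall_mem hs hu0)).symm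

end WithDensity

lemma abs_integral_le_setLIntegral_Ioi {ν : Measure ℝ} {φ : ℝ → ℝ} (hν0 : ν (Iic 0) = 0)
    (hφ : ∀ x > 0, 0 ≤ φ x) :
    |∫ x, φ x ∂ν| ≤ (∫⁻ x in Ioi 0, ENNReal.ofReal (φ x) ∂ν).toReal := by
  have hae : ∀ᵐ x ∂ν, x ∈ Ioi (0 : ℝ) := by
    rw [ae_iff]
    simp only [mem_Ioi, not_lt]
    exact hν0
  calc |∫ x, φ x ∂ν| = ‖∫ x in Ioi 0, φ x ∂ν‖ := by
        rw [Measure.restrict_eq_self_of_ae_mem hae, Real.norm_eq_abs]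
    _ ≤ (∫⁻ x in Ioi 0, ENNReal.ofReal ‖φ x‖ ∂ν).toReal := norm_integral_le_lintegral_norm _
    _ = (∫⁻ x in Ioi 0, ENNReal.ofReal (φ x) ∂ν).toReal := by
        rw [setLIntegral_congr_fun measurableSet_Ioi fun x hx => by
          rw [Real.norm_of_nonneg (hφ x hx)]]

section ScaledKernel

variable {ν : Measure ℝ} {g : ℝ → ℝ} {α C₀ K M δ r : ℝ}

lemma setLIntegral_Ioc_zero_inv_mul_le (hC₀ : 0 ≤ C₀) (hα : 0 < α) (hK : 0 ≤ K) (hr : 0 < r)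
    (hrδ : r⁻¹ ≤ δ)
    (hν : ν.restrict (Ioc 0 δ) ≤ volume.withDensity fun x => ENNReal.ofReal (C₀ * x ^ (α - 1)))
    (hg : ∀ t ∈ Ioc (0 : ℝ) 1, g t ≤ K * t * (1 + |log t|)) :
    ∫⁻ x in Ioc 0 r⁻¹, ENNReal.ofReal ((r * x)⁻¹ * g (r * x)) ∂ν
      ≤ ENNReal.ofReal (C₀ * K * (1 + 2 / α) * (2 / α) * r⁻¹ ^ α) := by
  set B := C₀ * K * (1 + 2 / α) * r⁻¹ ^ (α / 2) with hB
  have hpt : ∀ x ∈ Ioc 0 r⁻¹,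
      C₀ * x ^ (α - 1) * ((r * x)⁻¹ * g (r * x)) ≤ B * x ^ (α / 2 - 1) := by
    intro x ⟨hx0, hxr⟩
    have hrx0 : 0 < r * x := mul_pos hr hx0
    have hrx1 : r * x ≤ 1 := by simpa [hr.ne'] using mul_le_mul_of_nonneg_left hxr hr.le
    calc C₀ * x ^ (α - 1) * ((r * x)⁻¹ * g (r * x))
        ≤ C₀ * x ^ (α - 1) * (K * (1 + 1 / (α / 2)) * (r * x) ^ (-(α / 2))) := by
          refine mul_le_mul_of_nonneg_left ?_ (by positivity)
          exact inv_mul_le_mul_rpow_neg hK (half_pos hα) hrx0 hrx1 (hg _ ⟨hrx0, hrx1⟩)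
      _ = B * x ^ (α / 2 - 1) := by
          have hx : x ^ (α - 1) * x ^ (-(α / 2)) = x ^ (α / 2 - 1) := by
            rw [← rpow_add hx0]
            ring_nf
          rw [mul_rpow hr.le hx0.le, rpow_neg hr.le, ← inv_rpow hr.le, ← hx, hB, one_div_div]
          ring
  calc ∫⁻ x in Ioc 0 r⁻¹, ENNReal.ofReal ((r * x)⁻¹ * g (r * x)) ∂ν
      ≤ ENNReal.ofReal (∫ x in Ioc 0 r⁻¹, B * x ^ (α / 2 - 1)) := by
        refine setLIntegral_ofReal_le_of_restrict_le_withDensity (by fun_prop) measurableSet_Ioc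
          ((Measure.restrict_mono (Ioc_subset_Ioc_right hrδ) le_rfl).trans hν)
          (fun x hx => by have := hx.1; positivity) hpt (fun x hx => by have := hx.1; positivity)
          ((integrableOn_Ioc_zero_rpow_sub_one (half_pos hα)).const_mul B)
    _ = ENNReal.ofReal (C₀ * K * (1 + 2 / α) * (2 / α) * r⁻¹ ^ α) := by
        rw [integral_const_mul, integral_Ioc_zero_rpow_sub_one (by positivity) (half_pos hα)]
        have hsq : r⁻¹ ^ (α / 2) * r⁻¹ ^ (α / 2) = r⁻¹ ^ α := by
          rw [← rpow_add (by positivity), add_halves]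
        rw [← hsq, hB]
        congr 1
        ring

lemma setLIntegral_Ioc_inv_mul_le (hC₀ : 0 ≤ C₀) (hM : 0 ≤ M) (hr : 1 ≤ r) (hrδ : r⁻¹ ≤ δ)
    (hδ : δ ≤ 1)
    (hν : ν.restrict (Ioc 0 δ) ≤ volume.withDensity fun x => ENNReal.ofReal (C₀ * x ^ (α - 1)))
    (hg : ∀ t > 0, g t ≤ M) :
    ∫⁻ x in Ioc r⁻¹ δ, ENNReal.ofReal ((r * x)⁻¹ * g (r * x)) ∂ν
      ≤ ENNReal.ofReal (C₀ * M * r⁻¹ ^ min α 1 * log r) := by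
  have hr0 : 0 < r := zero_lt_one.trans_le hr
  have hε0 : 0 < r⁻¹ := inv_pos.2 hr0
  set m := min α 1
  have hpt : ∀ x ∈ Ioc r⁻¹ δ,
      C₀ * x ^ (α - 1) * ((r * x)⁻¹ * g (r * x)) ≤ C₀ * M * r⁻¹ ^ m * x⁻¹ := by
    intro x ⟨hxr, hxδ⟩
    have hx0 : 0 < x := hε0.trans hxr
    have hpow : x ^ (α - 1) ≤ r⁻¹ ^ (m - 1) :=
      calc x ^ (α - 1) ≤ x ^ (m - 1) :=
            rpow_le_rpow_of_exponent_ge hx0 (hxδ.trans hδ) (by linarith [min_le_left α 1])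
        _ ≤ r⁻¹ ^ (m - 1) := rpow_le_rpow_of_nonpos hε0 hxr.le (by linarith [min_le_right α 1])
    have hm : r⁻¹ ^ m = r⁻¹ ^ (m - 1) * r⁻¹ := by rw [← rpow_add_one hε0.ne', sub_add_cancel]
    calc C₀ * x ^ (α - 1) * ((r * x)⁻¹ * g (r * x))
        ≤ C₀ * x ^ (α - 1) * ((r * x)⁻¹ * M) := by gcongr; exact hg _ (by positivity)
      _ ≤ C₀ * r⁻¹ ^ (m - 1) * ((r * x)⁻¹ * M) := by gcongr
      _ = C₀ * M * r⁻¹ ^ m * x⁻¹ := by rw [hm, mul_inv]; ring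
  have hδ0 : 0 < δ := hε0.trans_le hrδ
  calc ∫⁻ x in Ioc r⁻¹ δ, ENNReal.ofReal ((r * x)⁻¹ * g (r * x)) ∂ν
      ≤ ENNReal.ofReal (∫ x in Ioc r⁻¹ δ, C₀ * M * r⁻¹ ^ m * x⁻¹) := by
        refine setLIntegral_ofReal_le_of_restrict_le_withDensity (by fun_prop) measurableSet_Ioc
          ((Measure.restrict_mono (Ioc_subset_Ioc_left hε0.le) le_rfl).trans hν)
          (fun x hx => by have := hε0.trans hx.1; positivity) hpt
          (fun x hx => by have := hε0.trans hx.1; positivity)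
          ((integrableOn_Ioc_inv hε0 hrδ).const_mul _)
    _ ≤ ENNReal.ofReal (C₀ * M * r⁻¹ ^ m * log r) := by
        rw [integral_const_mul, integral_Ioc_inv hε0 hrδ, div_inv_eq_mul]
        gcongr
        exact mul_le_of_le_one_left hr0.le hδ

lemma setLIntegral_Ioi_inv_mul_le [IsProbabilityMeasure ν] (hM : 0 ≤ M) (hr : 0 < r)
    (hδ : 0 < δ) (hg : ∀ t > 0, g t ≤ M) :
    ∫⁻ x in Ioi δ, ENNReal.ofReal ((r * x)⁻¹ * g (r * x)) ∂ν ≤ ENNReal.ofReal (M / δ * r⁻¹) := by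
  have hpt : ∀ x ∈ Ioi δ, (r * x)⁻¹ * g (r * x) ≤ M / δ * r⁻¹ := by
    intro x hx
    have hx0 : 0 < x := hδ.trans hx
    calc (r * x)⁻¹ * g (r * x) ≤ (r * x)⁻¹ * M := by gcongr; exact hg _ (by positivity)
      _ ≤ (r * δ)⁻¹ * M := by gcongr; exact hx.le
      _ = M / δ * r⁻¹ := by rw [mul_inv]; ring
  calc ∫⁻ x in Ioi δ, ENNReal.ofReal ((r * x)⁻¹ * g (r * x)) ∂ν
      ≤ ∫⁻ _ in Ioi δ, ENNReal.ofReal (M / δ * r⁻¹) ∂ν :=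
        setLIntegral_mono' measurableSet_Ioi fun x hx => ENNReal.ofReal_le_ofReal (hpt x hx)
    _ = ENNReal.ofReal (M / δ * r⁻¹) * ν (Ioi δ) := setLIntegral_const _ _
    _ ≤ ENNReal.ofReal (M / δ * r⁻¹) := mul_le_of_le_one_right' prob_le_one

theorem abs_integral_inv_mul_le [IsProbabilityMeasure ν] (hν0 : ν (Iic 0) = 0) (hC₀ : 0 ≤ C₀)
    (hα : 0 < α) (hK : 0 ≤ K) (hM : 0 ≤ M) (hδ0 : 0 < δ) (hδ1 : δ ≤ 1)
    (hν : ν.restrict (Ioc 0 δ) ≤ volume.withDensity fun x => ENNReal.ofReal (C₀ * x ^ (α - 1)))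
    (hg : ∀ t > 0, g t ∈ Icc 0 M) (hgK : ∀ t ∈ Ioc (0 : ℝ) 1, g t ≤ K * t * (1 + |log t|))
    (hr : max (exp 1) δ⁻¹ ≤ r) :
    |∫ x, (r * x)⁻¹ * g (r * x) ∂ν|
      ≤ (C₀ * K * (1 + 2 / α) * (2 / α) + C₀ * M + M / δ) * r⁻¹ ^ min α 1 * log r := by
  have hre : exp 1 ≤ r := le_of_max_le_left hr
  have hr1 : 1 ≤ r := (one_le_exp zero_le_one).trans hre
  have hr0 : 0 < r := zero_lt_one.trans_le hr1
  have hε0 : 0 < r⁻¹ := inv_pos.2 hr0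
  have hrδ : r⁻¹ ≤ δ := inv_le_of_inv_le₀ hδ0 (le_of_max_le_right hr)
  obtain ⟨L, hL⟩ : ∃ L, L = r⁻¹ ^ min α 1 * log r := ⟨_, rfl⟩
  have hαL : r⁻¹ ^ α ≤ L := hL ▸ inv_rpow_le_inv_rpow_mul_log hre (min_le_left α 1)
  have hεL : r⁻¹ ≤ L := by
    simpa only [rpow_one, hL] using inv_rpow_le_inv_rpow_mul_log hre (min_le_right α 1)
  have hL0 : 0 ≤ L := hε0.le.trans hεL
  rw [mul_assoc _ (r⁻¹ ^ _), ← hL]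
  refine (abs_integral_le_setLIntegral_Ioi hν0 fun x hx => ?_).trans
    (ENNReal.toReal_le_of_le_ofReal (by positivity) ?_)
  · exact mul_nonneg (by positivity) (hg _ (by positivity)).1
  calc ∫⁻ x in Ioi 0, ENNReal.ofReal ((r * x)⁻¹ * g (r * x)) ∂ν
      ≤ _ := setLIntegral_Ioi_le_add_add _ hε0.le hrδ
    _ ≤ ENNReal.ofReal (C₀ * K * (1 + 2 / α) * (2 / α) * r⁻¹ ^ α)
        + (ENNReal.ofReal (C₀ * M * L) + ENNReal.ofReal (M / δ * r⁻¹)) := by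
        gcongr
        · exact setLIntegral_Ioc_zero_inv_mul_le hC₀ hα hK hr0 hrδ hν hgK
        · rw [hL, ← mul_assoc]
          exact setLIntegral_Ioc_inv_mul_le hC₀ hM hr1 hrδ hδ1 hν fun t ht => (hg t ht).2
        · exact setLIntegral_Ioi_inv_mul_le hM hr0 hδ0 fun t ht => (hg t ht).2
    _ ≤ ENNReal.ofReal (C₀ * K * (1 + 2 / α) * (2 / α) * L)
        + (ENNReal.ofReal (C₀ * M * L) + ENNReal.ofReal (M / δ * L)) := by
        gcongr
    _ = ENNReal.ofReal ((C₀ * K * (1 + 2 / α) * (2 / α) + C₀ * M + M / δ) * L) := by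
        rw [← ENNReal.ofReal_add (by positivity) (by positivity),
          ← ENNReal.ofReal_add (by positivity) (by positivity)]
        congr 1
        ring

end ScaledKernel

theorem stmt18_general (ν : Measure ℝ) [IsProbabilityMeasure ν] (f g : ℝ → ℝ)
    (c α M K : ℝ)
    (hc : 0 < c) (hα : 0 < α)
    (hM : 0 ≤ M) (hK : 0 < K)
    (hν : ν = volume.withDensity (fun h => ENNReal.ofReal (f h)))
    (hν0 : ν (Set.Iic 0) = 0)
    (hf0 : Tendsto (fun h => f h / (c * h ^ (α - 1))) (𝓝[>] 0) (𝓝 1))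
    (hgbdd : ∀ t > (0 : ℝ), g t ∈ Set.Icc 0 M)
    (hgsmall : ∀ t ∈ Set.Ioc (0 : ℝ) 1, g t ≤ K * t * (1 + |Real.log t|)) :
    ∃ C t₀ : ℝ, 0 < C ∧ 0 < t₀ ∧ ∀ a σ : ℝ, 0 < σ → t₀ ≤ a / σ →
      |∫ h, (σ / (a * h)) * g (a * h / σ) ∂ν|
        ≤ C * (σ / a) ^ (min α 1) * Real.log (a / σ) := by
  obtain ⟨δ, ⟨hδ0, hδ1⟩, hfδ⟩ :=
    exists_Ioc_le_two_mul_of_tendsto_div (fun x hx => mul_pos hc (rpow_pos_of_pos hx _)) hf0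
  have hνδ : ν.restrict (Ioc 0 δ)
      ≤ volume.withDensity fun x => ENNReal.ofReal (2 * c * x ^ (α - 1)) := by
    rw [hν]
    exact restrict_withDensity_le_withDensity measurableSet_Ioc fun x hx =>
      ENNReal.ofReal_le_ofReal ((hfδ x hx).trans_eq (mul_assoc _ _ _).symm)
  refine ⟨2 * c * K * (1 + 2 / α) * (2 / α) + 2 * c * M + M / δ, max (exp 1) δ⁻¹,
    by positivity, by positivity, fun a σ _ hr => ?_⟩
  have hscale : ∀ x, σ / (a * x) * g (a * x / σ) = (a / σ * x)⁻¹ * g (a / σ * x) := fun x => by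
    rw [← mul_div_right_comm a x σ, inv_div]
  simp_rw [hscale, ← inv_div a σ]
  exact abs_integral_inv_mul_le hν0 (by positivity) hα hK.le hM hδ0 hδ1 hνδ hgbdd hgsmall hr

/-- Abstract error-moment estimate: for a positive fading variable `H` with
density `f(h) = c·h^{α−1}(1+o(1))` near `0` and `f(h) ≤ Cf/h^{1+β'}` in the tail,
and a bounded `g` with `g(t) ≤ K·t(1+|ln t|)` near `0`,
`E[(σ/(aH))·g(aH/σ)] = O((σ/a)^{min(α,1)}·ln(a/σ))` as `a/σ → ∞`. -/
theorem stmt18 (ν : Measure ℝ) [IsProbabilityMeasure ν] (f g : ℝ → ℝ)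
    (c α Cf β' h₁ M K : ℝ)
    (hc : 0 < c) (hα : 0 < α) (hCf : 0 < Cf) (hβ' : 0 < β') (hh₁ : 0 < h₁)
    (hM : 0 ≤ M) (hK : 0 < K)
    (hν : ν = volume.withDensity (fun h => ENNReal.ofReal (f h)))
    (hν0 : ν (Set.Iic 0) = 0)
    (hf0 : Tendsto (fun h => f h / (c * h ^ (α - 1))) (𝓝[>] 0) (𝓝 1))
    (hftail : ∀ h ≥ h₁, f h ≤ Cf / h ^ (1 + β'))
    (hgmeas : Measurable g) (hgbdd : ∀ t > (0 : ℝ), g t ∈ Set.Icc 0 M)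
    (hgsmall : ∀ t ∈ Set.Ioc (0 : ℝ) 1, g t ≤ K * t * (1 + |Real.log t|)) :
    ∃ C t₀ : ℝ, 0 < C ∧ 0 < t₀ ∧ ∀ a σ : ℝ, 0 < σ → t₀ ≤ a / σ →
      |∫ h, (σ / (a * h)) * g (a * h / σ) ∂ν|
        ≤ C * (σ / a) ^ (min α 1) * Real.log (a / σ) :=
  stmt18_general ν f g c α M K hc hα hM hK hν hν0 hf0 hgbdd hgsmall
end
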